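/- arXiv:1212.5434 — 5 statements merged into one kernel-verified Lean document; each statement's English description precedes it below -/
import Mathlib

section
/- For any real number a > 0, the function f_a(v) = a·exp(-a²v/(2(1-v))) / (√(2π)·v^{1/2}·(1-v)^{3/2}) is a probability density on (0,1), i.e. ∫₀¹ f_a(v) dv = 1. -/
/-!
Substituting `v = t² / (1 + t²)` maps `(0, ∞)` onto `(0, 1)`, with `1 - v = 1 / (1 + t²)`
and `dv = 2t / (1 + t²)² dt`. Under it `f_a(v) dv` becomes `2a / √(2π) · exp(-a²t²/2) dt`,
twice the density of a centred normal law of variance `1/a²` on the half-line.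
-/

open MeasureTheory Real Set

noncomputable def fragmentMassDensity (a v : ℝ) : ℝ :=
  a * exp (-(a ^ 2 * v) / (2 * (1 - v))) /
    (√(2 * π) * v ^ ((1 : ℝ) / 2) * (1 - v) ^ ((3 : ℝ) / 2))

lemma one_sub_sq_div_one_add_sq (t : ℝ) : 1 - t ^ 2 / (1 + t ^ 2) = (1 + t ^ 2)⁻¹ := by
  field_simp
  ring

lemma image_sq_div_one_add_sq_Ioi : (fun t : ℝ ↦ t ^ 2 / (1 + t ^ 2)) '' Ioi 0 = Ioo 0 1 := by
  ext v
  constructor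
  · rintro ⟨t, ht : 0 < t, rfl⟩
    refine ⟨by positivity, ?_⟩
    rw [div_lt_one (by positivity)]
    linarith
  · rintro ⟨hv0, hv1⟩
    have hw : 0 < v / (1 - v) := div_pos hv0 (by linarith)
    refine ⟨√(v / (1 - v)), sqrt_pos.mpr hw, ?_⟩
    have h1v : 1 - v ≠ 0 := by linarith
    simp only [sq_sqrt hw.le]
    field_simp
    ring

lemma hasDerivAt_sq_div_one_add_sq (t : ℝ) :
    HasDerivAt (fun t : ℝ ↦ t ^ 2 / (1 + t ^ 2)) (2 * t / (1 + t ^ 2) ^ 2) t := by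
  have hsq : HasDerivAt (fun t : ℝ ↦ t ^ 2) (2 * t) t := by simpa using hasDerivAt_pow 2 t
  exact (hsq.div (hsq.const_add 1) (by positivity)).congr_deriv (by ring)

lemma monotoneOn_sq_div_one_add_sq : MonotoneOn (fun t : ℝ ↦ t ^ 2 / (1 + t ^ 2)) (Ici 0) := by
  intro x hx y _ hxy
  rw [div_le_div_iff₀ (by positivity) (by positivity)]
  nlinarith [mul_le_mul hxy hxy (mem_Ici.mp hx) (hx.trans hxy)]

lemma integral_Ioo_zero_one_eq_integral_Ioi (g : ℝ → ℝ) :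
    ∫ v in Ioo 0 1, g v = ∫ t in Ioi 0, 2 * t / (1 + t ^ 2) ^ 2 * g (t ^ 2 / (1 + t ^ 2)) := by
  rw [← image_sq_div_one_add_sq_Ioi]
  exact integral_image_eq_integral_deriv_smul_of_monotoneOn measurableSet_Ioi
    (fun t _ ↦ (hasDerivAt_sq_div_one_add_sq t).hasDerivWithinAt)
    (monotoneOn_sq_div_one_add_sq.mono Ioi_subset_Ici_self) g

lemma mul_fragmentMassDensity_sq_div_one_add_sq (a : ℝ) {t : ℝ} (ht : 0 < t) :
    2 * t / (1 + t ^ 2) ^ 2 * fragmentMassDensity a (t ^ 2 / (1 + t ^ 2)) =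
      2 * a / √(2 * π) * exp (-(a ^ 2 / 2) * t ^ 2) := by
  have hpos : 0 < 1 + t ^ 2 := by positivity
  have hexp : -(a ^ 2 * (t ^ 2 / (1 + t ^ 2))) / (2 * (1 - t ^ 2 / (1 + t ^ 2))) =
      -(a ^ 2 / 2) * t ^ 2 := by
    rw [one_sub_sq_div_one_add_sq]
    field_simp
  have hsqrt : (t ^ 2 / (1 + t ^ 2)) ^ ((1 : ℝ) / 2) = t / (1 + t ^ 2) ^ ((1 : ℝ) / 2) := by
    rw [div_rpow (by positivity) hpos.le, ← rpow_natCast t 2, ← rpow_mul ht.le]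
    norm_num
  have hpow : (1 - t ^ 2 / (1 + t ^ 2)) ^ ((3 : ℝ) / 2) = ((1 + t ^ 2) ^ ((3 : ℝ) / 2))⁻¹ := by
    rw [one_sub_sq_div_one_add_sq, inv_rpow hpos.le]
  have hprod : (1 + t ^ 2) ^ ((1 : ℝ) / 2) * (1 + t ^ 2) ^ ((3 : ℝ) / 2) = (1 + t ^ 2) ^ 2 := by
    rw [← rpow_add hpos, show (1 : ℝ) / 2 + 3 / 2 = (2 : ℕ) by norm_num, rpow_natCast]
  have hsqrt2π : 0 < √(2 * π) := sqrt_pos.mpr (by positivity)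
  have hpos₁ : 0 < (1 + t ^ 2) ^ ((1 : ℝ) / 2) := rpow_pos_of_pos hpos _
  have hpos₃ : 0 < (1 + t ^ 2) ^ ((3 : ℝ) / 2) := rpow_pos_of_pos hpos _
  rw [fragmentMassDensity, hexp, hsqrt, hpow, ← hprod]
  field_simp

lemma integral_gaussian_Ioi_sq_div_two {a : ℝ} (ha : 0 < a) :
    ∫ t in Ioi 0, exp (-(a ^ 2 / 2) * t ^ 2) = √(2 * π) / (2 * a) := by
  rw [integral_gaussian_Ioi, show π / (a ^ 2 / 2) = 2 * π / a ^ 2 by ring,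
    sqrt_div (by positivity), sqrt_sq ha.le, div_div, mul_comm a]

/-- The function `f_a(v) = a·exp(-a²v/(2(1-v))) / (√(2π)·v^{1/2}·(1-v)^{3/2})`
is a probability density on `(0,1)` for every `a > 0`. -/
theorem fragment_mass_density_integrates_to_one (a : ℝ) (ha : 0 < a) :
    ∫ v in Set.Ioo (0 : ℝ) 1,
      a * Real.exp (-(a ^ 2 * v) / (2 * (1 - v))) /
        (Real.sqrt (2 * Real.pi) * v ^ ((1 : ℝ) / 2) * (1 - v) ^ ((3 : ℝ) / 2)) = 1 := by
  change ∫ v in Ioo 0 1, fragmentMassDensity a v = 1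
  rw [integral_Ioo_zero_one_eq_integral_Ioi,
    setIntegral_congr_fun measurableSet_Ioi
      fun t ht ↦ mul_fragmentMassDensity_sq_div_one_add_sq a ht,
    integral_const_mul, integral_gaussian_Ioi_sq_div_two ha]
  have hsqrt2π : 0 < √(2 * π) := sqrt_pos.mpr (by positivity)
  field_simp
end

section
/- Let (aₙ) be a nonnegative real sequence such that (1/√n)·∑_{k=1}^n a_k converges to a finite limit as n → ∞. Then (1/n)·∑_{k=1}^n a_k² converges to 0. -/
/-!
Shift to `b k = a (k + 1)` and let `S n = ∑_{k<n} b k`. Convergence of `S n / √n` gives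
`S n = O(√n)`, and, taking consecutive differences, `b n = o(√n)`. Hence `b k ^ 2 = o(b k √(k+1) + 1)`,
and summing this little-o relation gives `∑_{k<n} b k ^ 2 = o(∑_{k<n} b k √(k+1) + n)`. Since the
`b k` are nonnegative, `∑_{k<n} b k √(k+1) ≤ √n · S n = O(n)`, so `∑_{k<n} b k ^ 2 = o(n)`.
-/

open Filter Topology Asymptotics Finset

lemma tendsto_sqrt_div_sqrt_add_one :
    Tendsto (fun n : ℕ => √n / √(n + 1)) atTop (𝓝 1) := by
  have h := (Real.continuous_sqrt.tendsto 1).comp (tendsto_natCast_div_add_atTop (1 : ℝ))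
  rw [Real.sqrt_one] at h
  exact h.congr fun n => Real.sqrt_div (Nat.cast_nonneg n) _

lemma tendsto_sub_div_sqrt_of_tendsto_div_sqrt {u : ℕ → ℝ} {L : ℝ}
    (h : Tendsto (fun n : ℕ => u n / √n) atTop (𝓝 L)) :
    Tendsto (fun n : ℕ => (u (n + 1) - u n) / √(n + 1)) atTop (𝓝 0) := by
  have hsucc : Tendsto (fun n : ℕ => u (n + 1) / √(n + 1)) atTop (𝓝 L) := by
    refine (h.comp (tendsto_add_atTop_nat 1)).congr fun n => ?_
    simp only [Function.comp, Nat.cast_succ]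
  have hlim := hsucc.sub (h.mul tendsto_sqrt_div_sqrt_add_one)
  rw [mul_one, sub_self] at hlim
  refine hlim.congr' ?_
  filter_upwards [eventually_ge_atTop 1] with n hn
  have : √(n : ℝ) ≠ 0 := by positivity
  field_simp

lemma isLittleO_sqrt_of_tendsto_sum_div_sqrt {b : ℕ → ℝ} {L : ℝ}
    (h : Tendsto (fun n : ℕ => (∑ k ∈ range n, b k) / √n) atTop (𝓝 L)) :
    b =o[atTop] fun n : ℕ => √(n + 1) := by
  rw [isLittleO_iff_tendsto fun n hn => absurd hn (by positivity)]
  simpa [sum_range_succ_sub_sum] using tendsto_sub_div_sqrt_of_tendsto_div_sqrt h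

lemma sum_range_mul_sqrt_le {b : ℕ → ℝ} (hb : 0 ≤ b) (n : ℕ) :
    ∑ k ∈ range n, b k * √(k + 1) ≤ √n * ∑ k ∈ range n, b k := by
  rw [mul_sum]
  refine sum_le_sum fun k hk => ?_
  rw [mul_comm]
  exact mul_le_mul_of_nonneg_right (Real.sqrt_le_sqrt (by exact_mod_cast mem_range.mp hk)) (hb k)

lemma isLittleO_sum_range_sq {b : ℕ → ℝ} (hb : 0 ≤ b)
    (hlo : b =o[atTop] fun n : ℕ => √(n + 1))
    (hsum : (fun n => ∑ k ∈ range n, b k) =O[atTop] fun n : ℕ => √n) :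
    (fun n => ∑ k ∈ range n, b k ^ 2) =o[atTop] fun n : ℕ => (n : ℝ) := by
  have hbsqrt : ∀ k : ℕ, 0 ≤ b k * √(k + 1) := fun k => mul_nonneg (hb k) (Real.sqrt_nonneg _)
  -- The `+ 1` makes the partial sums of `g` diverge, as `IsLittleO.sum_range` requires.
  set g : ℕ → ℝ := fun k => b k * √(k + 1) + 1
  have hg : 0 ≤ g := fun k => add_nonneg (hbsqrt k) zero_le_one
  have hsq : (fun k => b k ^ 2) =o[atTop] g := by
    refine ((hlo.mul_isBigO (isBigO_refl b atTop)).trans_isBigO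
      (isBigO_of_le _ fun k => ?_)).congr_left fun k => by ring
    rw [mul_comm, Real.norm_of_nonneg (hbsqrt k), Real.norm_of_nonneg (hg k)]
    exact le_add_of_nonneg_right zero_le_one
  have hg_sum : ∀ n, ∑ k ∈ range n, g k = ∑ k ∈ range n, b k * √(k + 1) + n := by
    simp [g, sum_add_distrib]
  have hg_tendsto : Tendsto (fun n => ∑ k ∈ range n, g k) atTop atTop := by
    refine tendsto_atTop_mono (fun n => ?_) tendsto_natCast_atTop_atTop
    rw [hg_sum]
    exact le_add_of_nonneg_left (sum_nonneg fun k _ => hbsqrt k)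
  have hbound : (fun n : ℕ => √n * ∑ k ∈ range n, b k + n) =O[atTop] fun n : ℕ => (n : ℝ) := by
    refine IsBigO.add ?_ (isBigO_refl _ _)
    exact ((isBigO_refl (fun n : ℕ => √n) atTop).mul hsum).congr_right fun n =>
      Real.mul_self_sqrt (Nat.cast_nonneg n)
  refine (hsq.sum_range hg hg_tendsto).trans_isBigO ((isBigO_of_le _ fun n => ?_).trans hbound)
  rw [Real.norm_of_nonneg (sum_nonneg fun k _ => hg k), hg_sum]
  exact (add_le_add_left (sum_range_mul_sqrt_le hb n) _).trans (le_abs_self _)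

lemma sum_Icc_one_eq_sum_range (f : ℕ → ℝ) (n : ℕ) :
    ∑ k ∈ Icc 1 n, f k = ∑ k ∈ range n, f (k + 1) := by
  rw [range_eq_Ico, sum_Ico_add' f 0 n 1]
  rfl

/-- If `(aₙ)` is nonnegative and `(1/√n)·∑_{k=1}^n a_k` converges to a finite limit,
then `(1/n)·∑_{k=1}^n a_k²` converges to `0`. -/
theorem avg_sq_tendsto_zero (a : ℕ → ℝ) (ha : ∀ n, 0 ≤ a n) (L : ℝ)
    (h : Tendsto (fun n : ℕ => (∑ k ∈ Finset.Icc 1 n, a k) / Real.sqrt n) atTop (nhds L)) :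
    Tendsto (fun n : ℕ => (∑ k ∈ Finset.Icc 1 n, (a k) ^ 2) / n) atTop (nhds 0) := by
  simp only [sum_Icc_one_eq_sum_range] at h ⊢
  have hsum : (fun n => ∑ k ∈ range n, a (k + 1)) =O[atTop] fun n : ℕ => √n := by
    refine isBigO_of_div_tendsto_nhds (Eventually.of_forall fun n hn => ?_) L h
    obtain rfl : n = 0 := by exact_mod_cast (Real.sqrt_eq_zero (Nat.cast_nonneg n)).mp hn
    simp
  exact (isLittleO_sum_range_sq (fun k => ha (k + 1))
    (isLittleO_sqrt_of_tendsto_sum_div_sqrt h) hsum).tendsto_div_nhds_zero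
end

section
/- There exist constants C₁, C₂ > 0 such that the function G(x) = ∫₀^x ∫₀^s (1/(s-t))·((1-e^{-t})/t - (1-e^{-s})/s) dt ds satisfies G(x) ≤ C₁·x² and G(x) ≤ C₂·√x for all x ≥ 0. -/
open MeasureTheory

/-- The double-integral function arising in the second moment of the integrated
linear record process. -/
noncomputable def recordG (x : ℝ) : ℝ :=
  ∫ s in Set.Ioo (0 : ℝ) x, ∫ t in Set.Ioo (0 : ℝ) s,
    (1 / (s - t)) * ((1 - Real.exp (-t)) / t - (1 - Real.exp (-s)) / s)

/-!
By the mean value theorem the kernel `(f t - f s) / (s - t)`, with `f u = (1 - e^{-u}) / u`,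
equals `-f' c = (1 - e^{-c} (1 + c)) / c²` for some `c ∈ (t, s)`, so it lies between `0` and
`min 1 (1 / t²)`. Hence the inner integral `I s` is at most `s`; splitting it at `t = s / 2`
and using `f t ≤ t^{-1/2}` on the first half gives `I s ≤ 8 s^{-1/2}` for `s ≥ 1`. Integrating
`I` over `(0, x)` yields `G x ≤ x²` and `G x ≤ 16 √x`.
-/

open Real Set

theorem setIntegral_mono_of_nonneg_on {α : Type*} [MeasurableSpace α] {μ : Measure α}
    {f g : α → ℝ} {s : Set α} (hs : MeasurableSet s) (hg : IntegrableOn g s μ)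
    (hf : ∀ x ∈ s, 0 ≤ f x) (hfg : ∀ x ∈ s, f x ≤ g x) :
    ∫ x in s, f x ∂μ ≤ ∫ x in s, g x ∂μ :=
  integral_mono_of_nonneg (ae_restrict_of_forall_mem hs hf) hg (ae_restrict_of_forall_mem hs hfg)

theorem integrableOn_Ioo_rpow {r : ℝ} (hr : -1 < r) (a : ℝ) :
    IntegrableOn (fun t : ℝ => t ^ r) (Ioo 0 a) := by
  rcases le_total 0 a with ha | ha
  · exact ((intervalIntegrable_iff_integrableOn_Ioc_of_le ha).mp
      (intervalIntegral.intervalIntegrable_rpow' hr)).mono_set Ioo_subset_Ioc_self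
  · simp [Ioo_eq_empty_of_le ha]

theorem setIntegral_Ioo_rpow {r a : ℝ} (hr : -1 < r) (ha : 0 ≤ a) :
    ∫ t in Ioo 0 a, t ^ r = a ^ (r + 1) / (r + 1) := by
  rw [← integral_Ioc_eq_integral_Ioo, ← intervalIntegral.integral_of_le ha,
    integral_rpow (Or.inl hr), zero_rpow (by linarith), sub_zero]

theorem one_sub_exp_neg_mul_add_one_nonneg (c : ℝ) : 0 ≤ 1 - exp (-c) * (c + 1) := by
  have := mul_le_mul_of_nonneg_left (add_one_le_exp c) (exp_pos (-c)).le
  rw [← exp_add, neg_add_cancel, exp_zero] at this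
  linarith

theorem one_sub_exp_neg_mul_add_one_le_one {c : ℝ} (hc : -1 ≤ c) :
    1 - exp (-c) * (c + 1) ≤ 1 := by
  nlinarith [exp_pos (-c)]

theorem one_sub_exp_neg_mul_add_one_le_sq {c : ℝ} (hc : -1 ≤ c) :
    1 - exp (-c) * (c + 1) ≤ c ^ 2 := by
  nlinarith [add_one_le_exp (-c)]

theorem one_sub_exp_neg_le_sqrt {u : ℝ} (hu : 0 ≤ u) : 1 - exp (-u) ≤ √u := by
  rcases le_total u 1 with h | h
  · calc 1 - exp (-u) ≤ u := by linarith [add_one_le_exp (-u)]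
      _ ≤ √u := by nlinarith [sq_sqrt hu, sqrt_nonneg u, sqrt_le_one.mpr h]
  · calc 1 - exp (-u) ≤ 1 := by linarith [exp_pos (-u)]
      _ ≤ √u := one_le_sqrt.mpr h

namespace RecordG

/-- `(1 - e^{-u}) / u` is the mean of `e^{-v}` over `[0, u]`. -/
noncomputable def meanExpNeg (u : ℝ) : ℝ := (1 - exp (-u)) / u

noncomputable def kernel (s t : ℝ) : ℝ := (1 / (s - t)) * (meanExpNeg t - meanExpNeg s)

noncomputable def innerIntegral (s : ℝ) : ℝ := ∫ t in Ioo 0 s, kernel s t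

theorem recordG_eq_integral_innerIntegral (x : ℝ) :
    recordG x = ∫ s in Ioo 0 x, innerIntegral s :=
  rfl

theorem hasDerivAt_meanExpNeg {u : ℝ} (hu : u ≠ 0) :
    HasDerivAt meanExpNeg (-(1 - exp (-u) * (u + 1)) / u ^ 2) u := by
  have hnum : HasDerivAt (fun u : ℝ => 1 - exp (-u)) (exp (-u)) u := by
    simpa using ((hasDerivAt_neg u).exp).const_sub 1
  exact (hnum.div (hasDerivAt_id' u) hu).congr_deriv (by ring)

theorem meanExpNeg_le_rpow {u : ℝ} (hu : 0 < u) : meanExpNeg u ≤ u ^ (-(1 / 2) : ℝ) := by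
  rw [meanExpNeg, rpow_neg hu.le, ← sqrt_eq_rpow, div_le_iff₀ hu]
  calc 1 - exp (-u) ≤ √u := one_sub_exp_neg_le_sqrt hu.le
    _ = (√u)⁻¹ * u := by field_simp [sqrt_pos.mpr hu]; rw [sq_sqrt hu.le]

theorem meanExpNeg_nonneg {u : ℝ} (hu : 0 ≤ u) : 0 ≤ meanExpNeg u :=
  div_nonneg (by linarith [exp_le_one_iff.mpr (neg_nonpos.mpr hu)]) hu

theorem exists_kernel_eq {s t : ℝ} (ht : 0 < t) (hts : t < s) :
    ∃ c ∈ Ioo t s, kernel s t = (1 - exp (-c) * (c + 1)) / c ^ 2 := by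
  have hcont : ContinuousOn meanExpNeg (Icc t s) :=
    ContinuousOn.div (by fun_prop) (by fun_prop) fun u hu => (ht.trans_le hu.1).ne'
  obtain ⟨c, hc, hslope⟩ := exists_hasDerivAt_eq_slope meanExpNeg _ hts hcont
    fun c hc => hasDerivAt_meanExpNeg (ht.trans hc.1).ne'
  refine ⟨c, hc, ?_⟩
  rw [kernel, ← neg_sub (meanExpNeg s), mul_neg, one_div_mul_eq_div, ← hslope]
  ring

theorem kernel_nonneg {s t : ℝ} (ht : 0 < t) (hts : t < s) : 0 ≤ kernel s t := by
  obtain ⟨c, -, hc⟩ := exists_kernel_eq ht hts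
  exact hc ▸ div_nonneg (one_sub_exp_neg_mul_add_one_nonneg c) (sq_nonneg c)

theorem kernel_le_one {s t : ℝ} (ht : 0 < t) (hts : t < s) : kernel s t ≤ 1 := by
  obtain ⟨c, hc, hk⟩ := exists_kernel_eq ht hts
  have hc0 : 0 < c := ht.trans hc.1
  rw [hk, div_le_one (by positivity)]
  exact one_sub_exp_neg_mul_add_one_le_sq (by linarith)

theorem kernel_le_inv_sq {s t : ℝ} (ht : 0 < t) (hts : t < s) : kernel s t ≤ 1 / t ^ 2 := by
  obtain ⟨c, hc, hk⟩ := exists_kernel_eq ht hts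
  rw [hk]
  exact div_le_div₀ zero_le_one (one_sub_exp_neg_mul_add_one_le_one (by linarith [hc.1]))
    (by positivity) (pow_le_pow_left₀ ht.le hc.1.le 2)

theorem kernel_le_of_le_half {s t : ℝ} (ht : 0 < t) (hts : t ≤ s / 2) :
    kernel s t ≤ 2 / s * t ^ (-(1 / 2) : ℝ) := by
  have hs : 0 < s := by linarith
  calc kernel s t ≤ 1 / (s - t) * meanExpNeg t := by
        refine mul_le_mul_of_nonneg_left ?_ (one_div_nonneg.mpr (by linarith))
        linarith [meanExpNeg_nonneg hs.le]
    _ ≤ 2 / s * t ^ (-(1 / 2) : ℝ) := by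
        refine mul_le_mul ?_ (meanExpNeg_le_rpow ht) (meanExpNeg_nonneg ht.le) (by positivity)
        rw [div_le_div_iff₀ (by linarith) hs]
        linarith

theorem kernel_le {s t : ℝ} (ht : 0 < t) (hts : t < s) :
    kernel s t ≤ 2 / s * t ^ (-(1 / 2) : ℝ) + 4 / s ^ 2 := by
  have hs : 0 < s := ht.trans hts
  rcases le_total t (s / 2) with hhalf | hhalf
  · linarith [kernel_le_of_le_half ht hhalf, show 0 ≤ 4 / s ^ 2 by positivity]
  · have : 1 / t ^ 2 ≤ 4 / s ^ 2 := by
      rw [div_le_div_iff₀ (by positivity) (by positivity)]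
      nlinarith
    linarith [kernel_le_inv_sq ht hts, show 0 ≤ 2 / s * t ^ (-(1 / 2) : ℝ) by positivity]

theorem innerIntegral_nonneg (s : ℝ) : 0 ≤ innerIntegral s :=
  setIntegral_nonneg measurableSet_Ioo fun _ ht => kernel_nonneg ht.1 ht.2

theorem innerIntegral_le_self {s : ℝ} (hs : 0 ≤ s) : innerIntegral s ≤ s := by
  have h := norm_setIntegral_le_of_norm_le_const (μ := volume) (f := kernel s)
    (measure_Ioo_lt_top) fun t ht => by
      rw [norm_of_nonneg (kernel_nonneg ht.1 ht.2)]
      exact kernel_le_one ht.1 ht.2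
  rw [Real.volume_real_Ioo_of_le hs, sub_zero, one_mul] at h
  exact (Real.le_norm_self _).trans h

theorem innerIntegral_le_rpow_of_one_le {s : ℝ} (hs : 1 ≤ s) :
    innerIntegral s ≤ 8 * s ^ (-(1 / 2) : ℝ) := by
  have hs0 : 0 < s := by linarith
  have hbound : IntegrableOn (fun t => 2 / s * t ^ (-(1 / 2) : ℝ) + 4 / s ^ 2) (Ioo 0 s) :=
    ((integrableOn_Ioo_rpow (by norm_num) s).const_mul _).add
      (integrableOn_const measure_Ioo_lt_top.ne)
  calc innerIntegral s ≤ ∫ t in Ioo 0 s, (2 / s * t ^ (-(1 / 2) : ℝ) + 4 / s ^ 2) :=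
        setIntegral_mono_of_nonneg_on measurableSet_Ioo hbound
          (fun _ ht => kernel_nonneg ht.1 ht.2) fun _ ht => kernel_le ht.1 ht.2
    _ = 4 * s ^ (-(1 / 2) : ℝ) + 4 * s⁻¹ := by
        rw [integral_add ((integrableOn_Ioo_rpow (by norm_num) s).const_mul _)
          (integrableOn_const measure_Ioo_lt_top.ne), integral_const_mul,
          setIntegral_Ioo_rpow (by norm_num) hs0.le, setIntegral_const,
          Real.volume_real_Ioo_of_le hs0.le, show (-(1 / 2) : ℝ) + 1 = 1 / 2 by norm_num,
          show (-(1 / 2) : ℝ) = 1 / 2 - 1 by norm_num, rpow_sub_one hs0.ne', smul_eq_mul]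
        field_simp
        ring
    _ ≤ 8 * s ^ (-(1 / 2) : ℝ) := by
        have : s⁻¹ ≤ s ^ (-(1 / 2) : ℝ) := by
          rw [← rpow_neg_one]
          exact rpow_le_rpow_of_exponent_le hs (by norm_num)
        linarith

theorem innerIntegral_le_rpow {s : ℝ} (hs : 0 < s) :
    innerIntegral s ≤ 8 * s ^ (-(1 / 2) : ℝ) := by
  rcases le_total 1 s with h | h
  · exact innerIntegral_le_rpow_of_one_le h
  · have : 1 ≤ s ^ (-(1 / 2) : ℝ) := one_le_rpow_of_pos_of_le_one_of_nonpos hs h (by norm_num)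
    linarith [innerIntegral_le_self hs.le]

theorem recordG_le_sq {x : ℝ} (hx : 0 ≤ x) : recordG x ≤ x ^ 2 := by
  have h := norm_setIntegral_le_of_norm_le_const (μ := volume) (f := innerIntegral) (C := x)
    (measure_Ioo_lt_top (a := 0) (b := x)) fun s hs => by
      rw [norm_of_nonneg (innerIntegral_nonneg s)]
      exact (innerIntegral_le_self hs.1.le).trans hs.2.le
  rw [Real.volume_real_Ioo_of_le hx, sub_zero, ← recordG_eq_integral_innerIntegral] at h
  rw [sq]
  exact (Real.le_norm_self _).trans h

theorem recordG_le_sqrt {x : ℝ} (hx : 0 ≤ x) : recordG x ≤ 16 * √x :=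
  calc recordG x ≤ ∫ s in Ioo 0 x, 8 * s ^ (-(1 / 2) : ℝ) :=
        setIntegral_mono_of_nonneg_on measurableSet_Ioo
          ((integrableOn_Ioo_rpow (by norm_num) x).const_mul 8)
          (fun s _ => innerIntegral_nonneg s) fun _ hs => innerIntegral_le_rpow hs.1
    _ = 16 * √x := by
        rw [integral_const_mul, setIntegral_Ioo_rpow (by norm_num) hx, sqrt_eq_rpow]
        norm_num
        ring

end RecordG

open RecordG in
/-- There are constants `C₁, C₂ > 0` with `G(x) ≤ C₁ x²` and `G(x) ≤ C₂ √x`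
for all `x ≥ 0`. -/
theorem recordG_dominations :
    ∃ C₁ C₂ : ℝ, 0 < C₁ ∧ 0 < C₂ ∧ ∀ x : ℝ, 0 ≤ x →
      recordG x ≤ C₁ * x ^ 2 ∧ recordG x ≤ C₂ * Real.sqrt x := by
  refine ⟨1, 16, one_pos, by norm_num, fun x hx => ⟨?_, recordG_le_sqrt hx⟩⟩
  rw [one_mul]
  exact recordG_le_sq hx
end

section
/- For all real s, t with 0 < t < s, we have s·e^{-s} - t·e^{-t} - (s-t)·e^{-(s+t)} ≤ 0. -/
/-! Factoring out `e^{-s}` and writing `u = s - t`, the claim becomes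
`u (1 - e^{-t}) ≤ t (e^u - 1)`; by `1 + x ≤ e^x` both sides are compared with `t u`. -/

open Real

lemma mul_one_sub_exp_neg_le_mul_exp_sub_one {a b : ℝ} (ha : 0 ≤ a) (hb : 0 ≤ b) :
    b * (1 - exp (-a)) ≤ a * (exp b - 1) :=
  calc b * (1 - exp (-a)) ≤ b * a := by
        gcongr
        linarith [one_sub_le_exp_neg a]
    _ ≤ a * (exp b - 1) := by
        rw [mul_comm]
        gcongr
        linarith [add_one_le_exp b]

/-- For `0 < t < s`, `s·e^{-s} - t·e^{-t} - (s-t)·e^{-(s+t)} ≤ 0`. -/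
theorem double_integrand_nonpos (s t : ℝ) (ht : 0 < t) (hts : t < s) :
    s * Real.exp (-s) - t * Real.exp (-t) - (s - t) * Real.exp (-(s + t)) ≤ 0 := by
  have factor : s * exp (-s) - t * exp (-t) - (s - t) * exp (-(s + t))
      = exp (-s) * ((s - t) * (1 - exp (-t)) - t * (exp (s - t) - 1)) := by
    have h₁ : exp (-(s + t)) = exp (-s) * exp (-t) := by rw [← exp_add]; ring_nf
    have h₂ : exp (-s) * exp (s - t) = exp (-t) := by rw [← exp_add]; ring_nf
    rw [h₁]
    linear_combination t * h₂
  rw [factor]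
  exact mul_nonpos_of_nonneg_of_nonpos (exp_pos _).le
    (sub_nonpos.2 (mul_one_sub_exp_neg_le_mul_exp_sub_one ht.le (sub_nonneg.2 hts.le)))
end

section
/- Let Y be Rayleigh distributed (density y·e^{-y²/2} on (0,∞)). Then for q, v > 0, √v·∫₀^{q√v} E[e^{-tY}] dt = √v·∫₀^∞ e^{-x²/2}·(1 - e^{-x·q·√v}) dx ≤ √(π/2)·min(q·v, √v). -/
/-!
By Fubini and `∫₀^c e^{-ty} dt = (1 - e^{-cy})/y`, the integrated Laplace transform of the
Rayleigh density `y e^{-y²/2}` equals `∫₀^∞ e^{-x²/2} (1 - e^{-cx}) dx` with `c = q√v`.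
Bounding `1 - e^{-cx}` by `1` gives the half Gaussian integral `√(π/2)`; bounding it by `cx`
gives `c ∫₀^∞ x e^{-x²/2} dx = c`. Since `√(π/2) ≥ 1`, multiplying by `√v` yields the bound.
-/

open MeasureTheory Real Set Filter Topology

lemma integral_Ioo_exp_neg_mul {y : ℝ} (hy : y ≠ 0) {a : ℝ} (ha : 0 ≤ a) :
    ∫ t in Ioo 0 a, exp (-(t * y)) = (1 - exp (-(a * y))) / y := by
  have hderiv (t : ℝ) : HasDerivAt (fun t => -exp (-(t * y)) / y) (exp (-(t * y))) t :=
    (((hasDerivAt_id' t).mul_const y).fun_neg.exp.fun_neg.div_const y).congr_deriv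
      (by field_simp)
  rw [← integral_Ioc_eq_integral_Ioo, ← intervalIntegral.integral_of_le ha,
    intervalIntegral.integral_eq_sub_of_hasDerivAt (fun t _ => hderiv t)
      ((by fun_prop : Continuous fun t => exp (-(t * y))).intervalIntegrable _ _)]
  simp only [zero_mul, neg_zero, exp_zero]
  ring

lemma exp_neg_sq_div_two_eq (x : ℝ) : exp (-x ^ 2 / 2) = exp (-(1 / 2) * x ^ 2) := by
  ring_nf

lemma integrable_exp_neg_sq_div_two : Integrable fun x : ℝ => exp (-x ^ 2 / 2) := by
  simpa only [exp_neg_sq_div_two_eq] using integrable_exp_neg_mul_sq (b := 1 / 2) (by norm_num)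

lemma integrable_mul_exp_neg_sq_div_two : Integrable fun x : ℝ => x * exp (-x ^ 2 / 2) := by
  simpa only [exp_neg_sq_div_two_eq] using integrable_mul_exp_neg_mul_sq (b := 1 / 2) (by norm_num)

lemma integral_exp_neg_sq_div_two_Ioi : ∫ x in Ioi 0, exp (-x ^ 2 / 2) = √(π / 2) := by
  rw [funext exp_neg_sq_div_two_eq, integral_gaussian_Ioi,
    show π / (1 / 2) = 2 ^ 2 * (π / 2) by ring, sqrt_mul (by norm_num), sqrt_sq (by norm_num)]
  ring

lemma integral_mul_exp_neg_sq_div_two_Ioi : ∫ x in Ioi 0, x * exp (-x ^ 2 / 2) = 1 := by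
  have hderiv (x : ℝ) : HasDerivAt (fun x => -exp (-x ^ 2 / 2)) (x * exp (-x ^ 2 / 2)) x :=
    (((hasDerivAt_pow 2 x).fun_neg.div_const 2).exp.fun_neg).congr_deriv (by push_cast; ring)
  have hlim : Tendsto (fun x : ℝ => -exp (-x ^ 2 / 2)) atTop (𝓝 (-0)) :=
    (tendsto_exp_atBot.comp ((tendsto_neg_atTop_atBot.comp
      (tendsto_pow_atTop two_ne_zero)).atBot_div_const two_pos)).neg
  simpa using integral_Ioi_of_hasDerivAt_of_tendsto' (a := 0) (fun x _ => hderiv x)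
    integrable_mul_exp_neg_sq_div_two.integrableOn hlim

lemma integrable_laplace_rayleigh_prod (a : ℝ) :
    Integrable (Function.uncurry fun t y : ℝ => exp (-(t * y)) * (y * exp (-y ^ 2 / 2)))
      ((volume.restrict (Ioo 0 a)).prod (volume.restrict (Ioi 0))) := by
  have hdom : Integrable (fun p : ℝ × ℝ => (1 : ℝ) * (p.2 * exp (-p.2 ^ 2 / 2)))
      ((volume.restrict (Ioo 0 a)).prod (volume.restrict (Ioi 0))) :=
    (integrable_const 1).mul_prod integrable_mul_exp_neg_sq_div_two.integrableOn
  refine hdom.mono' (by fun_prop) ?_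
  rw [Measure.prod_restrict, ae_restrict_iff' (measurableSet_Ioo.prod measurableSet_Ioi)]
  refine .of_forall fun ⟨t, y⟩ ⟨⟨ht, _⟩, (hy : 0 < y)⟩ => ?_
  rw [Function.uncurry_apply_pair, norm_of_nonneg (by positivity)]
  exact mul_le_mul_of_nonneg_right (exp_le_one_iff.2 (by nlinarith)) (by positivity)

lemma integral_Ioo_laplace_rayleigh {c : ℝ} (hc : 0 ≤ c) :
    ∫ t in Ioo 0 c, ∫ y in Ioi 0, exp (-(t * y)) * (y * exp (-y ^ 2 / 2)) =
      ∫ x in Ioi 0, exp (-x ^ 2 / 2) * (1 - exp (-(x * c))) := by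
  rw [integral_integral_swap (integrable_laplace_rayleigh_prod c)]
  refine setIntegral_congr_fun measurableSet_Ioi fun y (hy : 0 < y) => ?_
  rw [integral_mul_const, integral_Ioo_exp_neg_mul hy.ne' hc, mul_comm c]
  field_simp

lemma integrableOn_exp_neg_sq_div_two_mul_one_sub_exp {c : ℝ} (hc : 0 ≤ c) :
    IntegrableOn (fun x => exp (-x ^ 2 / 2) * (1 - exp (-(x * c)))) (Ioi 0) := by
  refine integrable_exp_neg_sq_div_two.integrableOn.mono' (by fun_prop) ?_
  rw [ae_restrict_iff' measurableSet_Ioi]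
  refine .of_forall fun x (hx : 0 < x) => ?_
  have hexp : exp (-(x * c)) ≤ 1 := exp_le_one_iff.2 (by nlinarith)
  rw [norm_of_nonneg (mul_nonneg (exp_pos _).le (by linarith))]
  exact mul_le_of_le_one_right (exp_pos _).le (by linarith [exp_pos (-(x * c))])

lemma integral_exp_neg_sq_div_two_mul_one_sub_exp_le_sqrt {c : ℝ} (hc : 0 ≤ c) :
    ∫ x in Ioi 0, exp (-x ^ 2 / 2) * (1 - exp (-(x * c))) ≤ √(π / 2) := by
  rw [← integral_exp_neg_sq_div_two_Ioi]
  refine setIntegral_mono_on (integrableOn_exp_neg_sq_div_two_mul_one_sub_exp hc)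
    integrable_exp_neg_sq_div_two.integrableOn measurableSet_Ioi fun x _ => ?_
  exact mul_le_of_le_one_right (exp_pos _).le (by linarith [exp_pos (-(x * c))])

lemma integral_exp_neg_sq_div_two_mul_one_sub_exp_le {c : ℝ} (hc : 0 ≤ c) :
    ∫ x in Ioi 0, exp (-x ^ 2 / 2) * (1 - exp (-(x * c))) ≤ c := by
  calc ∫ x in Ioi 0, exp (-x ^ 2 / 2) * (1 - exp (-(x * c)))
      ≤ ∫ x in Ioi 0, x * exp (-x ^ 2 / 2) * c := by
        refine setIntegral_mono_on (integrableOn_exp_neg_sq_div_two_mul_one_sub_exp hc)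
          (integrable_mul_exp_neg_sq_div_two.integrableOn.mul_const c) measurableSet_Ioi
          fun x _ => ?_
        have := mul_le_mul_of_nonneg_left (one_sub_le_exp_neg (x * c)) (exp_pos (-x ^ 2 / 2)).le
        linarith
    _ = c := by rw [integral_mul_const, integral_mul_exp_neg_sq_div_two_Ioi, one_mul]

/-- For `Y` Rayleigh distributed (density `y·e^{-y²/2}` on `(0,∞)`) and `q, v > 0`,
`√v·∫₀^{q√v} E[e^{-tY}] dt = √v·∫₀^∞ e^{-x²/2}(1 - e^{-xq√v}) dx ≤ √(π/2)·min(qv, √v)`. -/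
theorem mean_separation_time_bound (q v : ℝ) (hq : 0 < q) (hv : 0 < v) :
    (Real.sqrt v * ∫ t in Set.Ioo (0 : ℝ) (q * Real.sqrt v),
        ∫ y in Set.Ioi (0 : ℝ), Real.exp (-(t * y)) * (y * Real.exp (-y ^ 2 / 2))) =
      (Real.sqrt v * ∫ x in Set.Ioi (0 : ℝ),
        Real.exp (-x ^ 2 / 2) * (1 - Real.exp (-(x * q * Real.sqrt v)))) ∧
    (Real.sqrt v * ∫ x in Set.Ioi (0 : ℝ),
        Real.exp (-x ^ 2 / 2) * (1 - Real.exp (-(x * q * Real.sqrt v)))) ≤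
      Real.sqrt (Real.pi / 2) * min (q * v) (Real.sqrt v) := by
  have hc : 0 ≤ q * √v := by positivity
  simp_rw [mul_assoc _ q]
  refine ⟨by rw [integral_Ioo_laplace_rayleigh hc], ?_⟩
  rw [mul_min_of_nonneg _ _ (sqrt_nonneg _)]
  refine le_min ?_ ?_
  · calc √v * ∫ x in Ioi 0, exp (-x ^ 2 / 2) * (1 - exp (-(x * (q * √v))))
        ≤ √v * (q * √v) :=
          mul_le_mul_of_nonneg_left (integral_exp_neg_sq_div_two_mul_one_sub_exp_le hc)
            (sqrt_nonneg v)
      _ = q * v := by rw [mul_left_comm, mul_self_sqrt hv.le]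
      _ ≤ √(π / 2) * (q * v) :=
          le_mul_of_one_le_left (by positivity) (one_le_sqrt.2 (by linarith [pi_gt_three]))
  · exact (mul_le_mul_of_nonneg_left (integral_exp_neg_sq_div_two_mul_one_sub_exp_le_sqrt hc)
      (sqrt_nonneg v)).trans_eq (mul_comm _ _)
end
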